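/- arXiv:2209.02096 — 11 statements merged into one kernel-verified Lean document; each statement's English description precedes it below -/
import Mathlib

section
/- Let A, B ≥ 0 and α, β ∈ ℝ, and set Δ = α − β. The infimum over λ ∈ ℝ of Q(λ) = A²·cos²(λ − α) + B²·sin²(λ − β) equals ((A² + B²) − √((A² + B²)² − 4A²B²cos²Δ))/2, and this infimum is attained at some λ ∈ ℝ. -/
open Real

set_option maxHeartbeats 1600000 in
/-- The minimum over `λ` of
`Q(λ) = A² cos²(λ - α) + B² sin²(λ - β)` (the squared distance from the origin
of the radial/normal relative-motion ellipse) equals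
`((A² + B²) - √((A² + B²)² - 4A²B²cos²(α - β)))/2`, and it is attained. -/
theorem rn_squared_min_separation (A B α β : ℝ) (hA : 0 ≤ A) (hB : 0 ≤ B) :
    IsLeast
      (Set.range fun lam : ℝ =>
        A ^ 2 * Real.cos (lam - α) ^ 2 + B ^ 2 * Real.sin (lam - β) ^ 2)
      (((A ^ 2 + B ^ 2) -
        Real.sqrt ((A ^ 2 + B ^ 2) ^ 2 -
          4 * A ^ 2 * B ^ 2 * Real.cos (α - β) ^ 2)) / 2) := by
  set a := A ^ 2 * cos (2 * α) - B ^ 2 * cos (2 * β) with ha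
  set b := A ^ 2 * sin (2 * α) - B ^ 2 * sin (2 * β) with hb
  have key : ∀ lam : ℝ,
      A ^ 2 * cos (lam - α) ^ 2 + B ^ 2 * sin (lam - β) ^ 2
        = (A ^ 2 + B ^ 2) / 2 + (a * cos (2 * lam) + b * sin (2 * lam)) / 2 := by
    intro lam
    have e1 : cos (lam - α) ^ 2
        = 1 / 2 + (cos (2 * lam) * cos (2 * α) + sin (2 * lam) * sin (2 * α)) / 2 := by
      rw [cos_sq, show 2 * (lam - α) = 2 * lam - 2 * α from by ring, cos_sub]
    have e2 : sin (lam - β) ^ 2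
        = 1 / 2 - (cos (2 * lam) * cos (2 * β) + sin (2 * lam) * sin (2 * β)) / 2 := by
      rw [sin_sq, cos_sq, show 2 * (lam - β) = 2 * lam - 2 * β from by ring, cos_sub]
      ring
    rw [e1, e2, ha, hb]; ring
  have hab : a ^ 2 + b ^ 2 = (A ^ 2 + B ^ 2) ^ 2 - 4 * A ^ 2 * B ^ 2 * cos (α - β) ^ 2 := by
    have h' : cos (2 * α) * cos (2 * β) + sin (2 * α) * sin (2 * β)
        = 2 * cos (α - β) ^ 2 - 1 := by
      rw [← cos_sub, show 2 * α - 2 * β = 2 * (α - β) from by ring, cos_two_mul]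
    have s1 := sin_sq_add_cos_sq (2 * α)
    have s2 := sin_sq_add_cos_sq (2 * β)
    rw [ha, hb]
    linear_combination A ^ 4 * s1 + B ^ 4 * s2 - 2 * A ^ 2 * B ^ 2 * h'
  set R := Real.sqrt ((A ^ 2 + B ^ 2) ^ 2 - 4 * A ^ 2 * B ^ 2 * cos (α - β) ^ 2) with hRdef
  have hargnn : 0 ≤ (A ^ 2 + B ^ 2) ^ 2 - 4 * A ^ 2 * B ^ 2 * cos (α - β) ^ 2 := by
    rw [← hab]; positivity
  have hR2 : R ^ 2 = a ^ 2 + b ^ 2 := by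
    rw [hRdef, sq_sqrt hargnn, hab]
  have hRnn : 0 ≤ R := Real.sqrt_nonneg _
  clear_value a b R
  constructor
  · -- attainment
    rcases eq_or_lt_of_le hRnn with h0 | hpos
    · have hz : a ^ 2 + b ^ 2 = 0 := by rw [← hR2, ← h0]; ring
      have ha0 : a = 0 := by nlinarith [sq_nonneg a, sq_nonneg b]
      have hb0 : b = 0 := by nlinarith [sq_nonneg a, sq_nonneg b]
      refine ⟨0, ?_⟩
      beta_reduce
      rw [key 0, ha0, hb0, ← h0]; ring
    · have hRne : R ≠ 0 := ne_of_gt hpos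
      have haR : -1 ≤ -a / R := by
        rw [le_div_iff₀ hpos]
        nlinarith [sq_nonneg b, sq_nonneg (a - R)]
      have haR' : -a / R ≤ 1 := by
        rw [div_le_one hpos]
        nlinarith [sq_nonneg b, sq_nonneg (a + R)]
      have hsin : sin (arccos (-a / R)) = |b / R| := by
        rw [Real.sin_arccos, show 1 - (-a / R) ^ 2 = (b / R) ^ 2 from by
          field_simp; linarith [hR2], Real.sqrt_sq_eq_abs]
      have hcos : cos (arccos (-a / R)) = -a / R := Real.cos_arccos haR haR'
      obtain ⟨θ, hcθ, hsθ⟩ : ∃ θ : ℝ, cos θ = -a / R ∧ sin θ = -b / R := by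
        rcases le_or_gt b 0 with hbs | hbs
        · exact ⟨arccos (-a / R), hcos, by
            rw [hsin, abs_of_nonpos (div_nonpos_of_nonpos_of_nonneg hbs hpos.le)]
            ring⟩
        · exact ⟨-arccos (-a / R), by rw [cos_neg, hcos], by
            rw [sin_neg, hsin, abs_of_pos (div_pos hbs hpos)]
            ring⟩
      refine ⟨θ / 2, ?_⟩
      beta_reduce
      rw [key (θ / 2), show 2 * (θ / 2) = θ from by ring, hcθ, hsθ]
      have : a * (-a / R) + b * (-b / R) = -R := by
        field_simp
        nlinarith [hR2]
      rw [this]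
      ring
  · rintro x ⟨lam, rfl⟩
    beta_reduce
    rw [key lam]
    set c := cos (2 * lam) with hc
    set s := sin (2 * lam) with hs
    have hcs : s ^ 2 + c ^ 2 = 1 := sin_sq_add_cos_sq _
    clear_value c s
    have ht2 : (a * c + b * s) ^ 2 ≤ R ^ 2 := by
      nlinarith [sq_nonneg (a * s - b * c), hR2, hcs]
    have ht : -R ≤ a * c + b * s := by
      nlinarith [sq_nonneg (a * c + b * s + R), hRnn, ht2]
    linarith
end

section
/- Let a > 0, ρ > 0, c34 ≥ 0, c56 ≥ 0 with (c34, c56) ≠ (0, 0), and θ34, θ56 ∈ ℝ. Set A = a·c34, B = a·c56/ρ and Δ = θ34 − θ56. Then the infimum over λ ∈ ℝ of S_RN(λ) = sqrt( (a·c34·cos(λ − θ34))² + ((a·c56/ρ)·sin(λ − θ56))² ) is attained and equals √2·A·B·|cos Δ| / sqrt( A² + B² + sqrt( (A² + B²)² − 4A²B²cos²Δ ) ). -/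
set_option maxHeartbeats 1000000 in
/-- Closed form for the minimum radial/normal (RN) separation of the
uncontrolled linearized relative orbital motion in an eccentric orbit:
with `A = a c34`, `B = a c56 / ρ`, `Δ = θ34 - θ56`, the minimum over `λ` of
`S_RN(λ)` is attained and equals
`√2 A B |cos Δ| / √(A² + B² + √((A² + B²)² - 4 A² B² cos² Δ))`. -/
theorem rn_min_separation (a ρ c34 c56 θ34 θ56 : ℝ)
    (ha : 0 < a) (hρ : 0 < ρ) (h34 : 0 ≤ c34) (h56 : 0 ≤ c56)
    (hne : (c34, c56) ≠ (0, 0)) :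
    IsLeast
      (Set.range fun lam : ℝ =>
        Real.sqrt ((a * c34 * Real.cos (lam - θ34)) ^ 2 +
          ((a * c56 / ρ) * Real.sin (lam - θ56)) ^ 2))
      (Real.sqrt 2 * (a * c34) * (a * c56 / ρ) * |Real.cos (θ34 - θ56)| /
        Real.sqrt ((a * c34) ^ 2 + (a * c56 / ρ) ^ 2 +
          Real.sqrt (((a * c34) ^ 2 + (a * c56 / ρ) ^ 2) ^ 2 -
            4 * (a * c34) ^ 2 * (a * c56 / ρ) ^ 2 * Real.cos (θ34 - θ56) ^ 2))) := by
  set A : ℝ := a * c34 with hA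
  set B : ℝ := a * c56 / ρ with hB
  set cΔ : ℝ := Real.cos (θ34 - θ56) with hcD
  have hA0 : 0 ≤ A := by positivity
  have hB0 : 0 ≤ B := by positivity
  -- A² + B² > 0
  have hAB : 0 < A ^ 2 + B ^ 2 := by
    rcases (by simpa [Prod.ext_iff] using hne : ¬(c34 = 0 ∧ c56 = 0)) with h
    rcases eq_or_lt_of_le h34 with h1 | h1
    · rcases eq_or_lt_of_le h56 with h2 | h2
      · exact absurd ⟨h1.symm, h2.symm⟩ h
      · have : 0 < B := by rw [hB]; positivity
        positivity
    · have : 0 < A := by rw [hA]; positivity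
      positivity
  have hcD2 : cΔ ^ 2 ≤ 1 := by
    have := Real.neg_one_le_cos (θ34 - θ56)
    have := Real.cos_le_one (θ34 - θ56)
    nlinarith
  have hDnn : 0 ≤ (A ^ 2 + B ^ 2) ^ 2 - 4 * A ^ 2 * B ^ 2 * cΔ ^ 2 := by
    nlinarith [sq_nonneg (A ^ 2 - B ^ 2), sq_nonneg (A * B)]
  set R : ℝ := Real.sqrt ((A ^ 2 + B ^ 2) ^ 2 - 4 * A ^ 2 * B ^ 2 * cΔ ^ 2) with hRdef
  have hR0 : 0 ≤ R := Real.sqrt_nonneg _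
  have hR2 : R ^ 2 = (A ^ 2 + B ^ 2) ^ 2 - 4 * A ^ 2 * B ^ 2 * cΔ ^ 2 :=
    Real.sq_sqrt hDnn
  have hRle : R ≤ A ^ 2 + B ^ 2 := by
    nlinarith [hR2, sq_nonneg (A * B * cΔ)]
  -- X lam and the value identity
  have hf : ∀ lam : ℝ,
      (A * Real.cos (lam - θ34)) ^ 2 + (B * Real.sin (lam - θ56)) ^ 2 =
      (A ^ 2 + B ^ 2) / 2 +
        (A ^ 2 * Real.cos (2 * (lam - θ34)) - B ^ 2 * Real.cos (2 * (lam - θ56))) / 2 := by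
    intro lam
    have h1 : Real.cos (lam - θ34) ^ 2 = 1 / 2 + Real.cos (2 * (lam - θ34)) / 2 :=
      Real.cos_sq _
    have h2 : Real.sin (lam - θ56) ^ 2 = 1 / 2 - Real.cos (2 * (lam - θ56)) / 2 := by
      rw [Real.sin_sq, Real.cos_sq]; ring
    linear_combination A ^ 2 * h1 + B ^ 2 * h2
  -- amplitude bound
  have hX : ∀ lam : ℝ,
      (A ^ 2 * Real.cos (2 * (lam - θ34)) - B ^ 2 * Real.cos (2 * (lam - θ56))) ^ 2 ≤ R ^ 2 := by
    intro lam
    rw [hR2]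
    set u : ℝ := 2 * (lam - θ34)
    set v : ℝ := 2 * (lam - θ56)
    have e1 : Real.cos u * Real.cos v + Real.sin u * Real.sin v = Real.cos (u - v) :=
      (Real.cos_sub u v).symm
    have e2 : u - v = 2 * (θ56 - θ34) := by simp only [u, v]; ring
    have e3 : Real.cos (2 * (θ56 - θ34)) = 2 * cΔ ^ 2 - 1 := by
      rw [Real.cos_two_mul, show θ56 - θ34 = -(θ34 - θ56) by ring, Real.cos_neg, hcD]
    have pu := Real.sin_sq_add_cos_sq u
    have pv := Real.sin_sq_add_cos_sq v
    have key : (A ^ 2 * Real.cos u - B ^ 2 * Real.cos v) ^ 2 +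
        (A ^ 2 * Real.sin u - B ^ 2 * Real.sin v) ^ 2 =
        (A ^ 2 + B ^ 2) ^ 2 - 4 * A ^ 2 * B ^ 2 * cΔ ^ 2 := by
      have : (A ^ 2 * Real.cos u - B ^ 2 * Real.cos v) ^ 2 +
          (A ^ 2 * Real.sin u - B ^ 2 * Real.sin v) ^ 2 =
          A ^ 4 * (Real.sin u ^ 2 + Real.cos u ^ 2) +
          B ^ 4 * (Real.sin v ^ 2 + Real.cos v ^ 2) -
          2 * A ^ 2 * B ^ 2 * (Real.cos u * Real.cos v + Real.sin u * Real.sin v) := by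
        ring
      rw [this, pu, pv, e1, e2, e3]; ring
    linarith [key, sq_nonneg (A ^ 2 * Real.sin u - B ^ 2 * Real.sin v)]
  -- existence of lam₀ with X lam₀ = -R
  set p : ℝ := A ^ 2 * Real.cos (2 * θ34) - B ^ 2 * Real.cos (2 * θ56) with hp
  set q : ℝ := A ^ 2 * Real.sin (2 * θ34) - B ^ 2 * Real.sin (2 * θ56) with hq
  have hXform : ∀ lam : ℝ,
      A ^ 2 * Real.cos (2 * (lam - θ34)) - B ^ 2 * Real.cos (2 * (lam - θ56)) =
      Real.cos (2 * lam) * p + Real.sin (2 * lam) * q := by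
    intro lam
    rw [show 2 * (lam - θ34) = 2 * lam - 2 * θ34 by ring,
        show 2 * (lam - θ56) = 2 * lam - 2 * θ56 by ring,
        Real.cos_sub, Real.cos_sub, hp, hq]
    ring
  have hpq : p ^ 2 + q ^ 2 = R ^ 2 := by
    rw [hR2, hp, hq]
    have e1 : Real.cos (2 * θ34) * Real.cos (2 * θ56) +
        Real.sin (2 * θ34) * Real.sin (2 * θ56) = Real.cos (2 * θ34 - 2 * θ56) :=
      (Real.cos_sub _ _).symm
    have e2 : Real.cos (2 * θ34 - 2 * θ56) = 2 * cΔ ^ 2 - 1 := by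
      rw [show 2 * θ34 - 2 * θ56 = 2 * (θ34 - θ56) by ring, Real.cos_two_mul, hcD]
    have pu := Real.sin_sq_add_cos_sq (2 * θ34)
    have pv := Real.sin_sq_add_cos_sq (2 * θ56)
    have e3 := e1.trans e2
    linear_combination A ^ 4 * pu + B ^ 4 * pv - 2 * A ^ 2 * B ^ 2 * e3
  obtain ⟨lam₀, hlam₀⟩ : ∃ lam₀ : ℝ,
      A ^ 2 * Real.cos (2 * (lam₀ - θ34)) - B ^ 2 * Real.cos (2 * (lam₀ - θ56)) = -R := by
    rcases eq_or_lt_of_le hR0 with hRz | hRz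
    · refine ⟨0, ?_⟩
      have hp0 : p = 0 := by nlinarith [hpq, sq_nonneg p, sq_nonneg q]
      rw [hXform 0, hp0, ← hRz]
      simp
    · set z : ℂ := (p : ℂ) + (q : ℂ) * Complex.I with hz
      have habs : ‖z‖ = R := by
        rw [hz, Complex.norm_def, Complex.normSq_add_mul_I, hpq, Real.sqrt_sq hR0]
      have hz0 : z ≠ 0 := by
        intro h
        rw [h, norm_zero] at habs
        exact absurd habs.symm (ne_of_gt hRz)
      have hre : z.re = p := by simp [hz]
      have him : z.im = q := by simp [hz]
      have hcos : Real.cos z.arg = p / R := by rw [Complex.cos_arg hz0, hre, habs]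
      have hsin : Real.sin z.arg = q / R := by rw [Complex.sin_arg, him, habs]
      refine ⟨(z.arg + Real.pi) / 2, ?_⟩
      rw [hXform, show 2 * ((z.arg + Real.pi) / 2) = z.arg + Real.pi by ring,
          Real.cos_add_pi, Real.sin_add_pi, hcos, hsin]
      field_simp
      nlinarith [hpq]
  -- the target equals √((A²+B²-R)/2)
  have hmnn : 0 ≤ (A ^ 2 + B ^ 2 - R) / 2 := by linarith
  have hden : 0 < A ^ 2 + B ^ 2 + R := by linarith
  have hT : Real.sqrt 2 * A * B * |cΔ| / Real.sqrt (A ^ 2 + B ^ 2 + R) =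
      Real.sqrt ((A ^ 2 + B ^ 2 - R) / 2) := by
    have hnum : Real.sqrt 2 * A * B * |cΔ| = Real.sqrt (2 * A ^ 2 * B ^ 2 * cΔ ^ 2) := by
      rw [show 2 * A ^ 2 * B ^ 2 * cΔ ^ 2 = 2 * (A * B * |cΔ|) ^ 2 by
            rw [mul_pow, mul_pow, sq_abs]; ring,
          Real.sqrt_mul (by norm_num), Real.sqrt_sq (by positivity)]
      ring
    have hfrac : 2 * A ^ 2 * B ^ 2 * cΔ ^ 2 / (A ^ 2 + B ^ 2 + R) =
        (A ^ 2 + B ^ 2 - R) / 2 := by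
      rw [div_eq_div_iff (ne_of_gt hden) (by norm_num)]
      nlinarith [hR2]
    rw [hnum, ← Real.sqrt_div (by positivity), hfrac]
  constructor
  · refine ⟨lam₀, ?_⟩
    simp only
    rw [hf lam₀, hlam₀, hT]
    congr 1
    ring
  · rintro y ⟨lam, rfl⟩
    simp only
    rw [hT, hf lam]
    apply Real.sqrt_le_sqrt
    have h1 := hX lam
    nlinarith [sq_nonneg (A ^ 2 * Real.cos (2 * (lam - θ34)) -
      B ^ 2 * Real.cos (2 * (lam - θ56)) + R)]
end

section
/- Let a > 0, ρ > 0, c34 > 0, c56 > 0, θ34, θ56 ∈ ℝ and ε > 0, and assume ε ≤ a·c34 and ε ≤ a·c56/ρ. Then S_RN(λ) ≥ ε for all λ ∈ ℝ if and only if |cos(θ34 − θ56)| ≥ (ε·ρ/(a·c34·c56)) · sqrt( c34² + (c56/ρ)² − ε²/a² ). -/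
private lemma exists_angle (c s : ℝ) (h : c ^ 2 + s ^ 2 = 1) :
    ∃ u : ℝ, Real.cos u = c ∧ Real.sin u = s := by
  have hc1 : -1 ≤ c := by nlinarith [sq_nonneg s, sq_nonneg (c + 1)]
  have hc2 : c ≤ 1 := by nlinarith [sq_nonneg s, sq_nonneg (c - 1)]
  have hs : Real.sin (Real.arccos c) = Real.sqrt (1 - c ^ 2) := Real.sin_arccos c
  have h1c : 1 - c ^ 2 = s ^ 2 := by linarith
  rcases le_or_gt 0 s with hs0 | hs0
  · exact ⟨Real.arccos c, Real.cos_arccos hc1 hc2, by rw [hs, h1c, Real.sqrt_sq hs0]⟩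
  · refine ⟨-Real.arccos c, ?_, ?_⟩
    · rw [Real.cos_neg, Real.cos_arccos hc1 hc2]
    · rw [Real.sin_neg, hs, h1c, Real.sqrt_sq_eq_abs, abs_of_neg hs0, neg_neg]

set_option maxHeartbeats 1000000 in
private lemma key_iff (A B ε cφ sφ : ℝ) (hA : 0 < A) (hB : 0 < B) (hε : 0 < ε)
    (hεA : ε ≤ A) (hεB : ε ≤ B) (h1 : cφ ^ 2 + sφ ^ 2 = 1) :
    (∀ c s : ℝ, c ^ 2 + s ^ 2 = 1 →
        ε ^ 2 ≤ A ^ 2 * c ^ 2 + B ^ 2 * (s * cφ + c * sφ) ^ 2) ↔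
      ε ^ 2 * (A ^ 2 + B ^ 2 - ε ^ 2) ≤ A ^ 2 * B ^ 2 * cφ ^ 2 := by
  have hN11nn : 0 ≤ A ^ 2 - ε ^ 2 + B ^ 2 * sφ ^ 2 := by
    nlinarith [sq_nonneg sφ, mul_pos hB hB]
  constructor
  · intro h
    -- homogenize the hypothesis
    have h' : ∀ x y : ℝ, ε ^ 2 * (x ^ 2 + y ^ 2) ≤
        A ^ 2 * x ^ 2 + B ^ 2 * (y * cφ + x * sφ) ^ 2 := by
      intro x y
      rcases eq_or_lt_of_le (by positivity : (0:ℝ) ≤ x ^ 2 + y ^ 2) with h0 | h0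
      · have hx2 : x ^ 2 = 0 := by linarith [sq_nonneg x, sq_nonneg y]
        have hy2 : y ^ 2 = 0 := by linarith [sq_nonneg x, sq_nonneg y]
        have hx : x = 0 := sq_eq_zero_iff.mp hx2
        have hy : y = 0 := sq_eq_zero_iff.mp hy2
        simp [hx, hy]
      · set r := Real.sqrt (x ^ 2 + y ^ 2) with hrdef
        have hr : 0 < r := Real.sqrt_pos.2 h0
        have hr2 : r ^ 2 = x ^ 2 + y ^ 2 := Real.sq_sqrt h0.le
        have hrne : r ≠ 0 := ne_of_gt hr
        have h2 := h (x / r) (y / r) (by field_simp; linarith)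
        have hkey : A ^ 2 * (x / r) ^ 2 + B ^ 2 * (y / r * cφ + x / r * sφ) ^ 2
            = (A ^ 2 * x ^ 2 + B ^ 2 * (y * cφ + x * sφ) ^ 2) / r ^ 2 := by
          field_simp
        rw [hkey, le_div_iff₀ (by positivity)] at h2
        calc ε ^ 2 * (x ^ 2 + y ^ 2) = ε ^ 2 * r ^ 2 := by rw [hr2]
          _ ≤ A ^ 2 * x ^ 2 + B ^ 2 * (y * cφ + x * sφ) ^ 2 := h2
    have hεA2 : ε ^ 2 ≤ A ^ 2 := by nlinarith
    rcases eq_or_lt_of_le hN11nn with h0 | h0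
    · -- degenerate case: A = ε and sφ = 0
      have hBs : 0 ≤ B ^ 2 * sφ ^ 2 := by positivity
      have hA2 : A ^ 2 = ε ^ 2 := by linarith
      have hsφ : sφ ^ 2 = 0 := by
        have hBpos : 0 < B ^ 2 := by positivity
        nlinarith
      have hcφ : cφ ^ 2 = 1 := by linarith
      have : A ^ 2 * B ^ 2 * cφ ^ 2 = ε ^ 2 * (A ^ 2 + B ^ 2 - ε ^ 2) := by
        linear_combination (B ^ 2 * cφ ^ 2 - ε ^ 2) * hA2 + ε ^ 2 * B ^ 2 * hcφ
      linarith
    · have hq := h' (-(B ^ 2 * sφ * cφ)) (A ^ 2 - ε ^ 2 + B ^ 2 * sφ ^ 2)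
      have heq : A ^ 2 * (-(B ^ 2 * sφ * cφ)) ^ 2
          + B ^ 2 * ((A ^ 2 - ε ^ 2 + B ^ 2 * sφ ^ 2) * cφ + (-(B ^ 2 * sφ * cφ)) * sφ) ^ 2
          - ε ^ 2 * ((-(B ^ 2 * sφ * cφ)) ^ 2 + (A ^ 2 - ε ^ 2 + B ^ 2 * sφ ^ 2) ^ 2)
          = (A ^ 2 - ε ^ 2 + B ^ 2 * sφ ^ 2) *
            (A ^ 2 * B ^ 2 * cφ ^ 2 - ε ^ 2 * (A ^ 2 + B ^ 2 - ε ^ 2)) := by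
        linear_combination (-(A ^ 2 - ε ^ 2 + B ^ 2 * sφ ^ 2) * ε ^ 2 * B ^ 2) * h1
      have h2 : 0 ≤ (A ^ 2 - ε ^ 2 + B ^ 2 * sφ ^ 2) *
          (A ^ 2 * B ^ 2 * cφ ^ 2 - ε ^ 2 * (A ^ 2 + B ^ 2 - ε ^ 2)) := by linarith
      have h3 := (mul_nonneg_iff_of_pos_left h0).mp h2
      linarith
  · intro hd c s hcs
    have hεA2 : ε ^ 2 ≤ A ^ 2 := by nlinarith
    have hεB2 : ε ^ 2 ≤ B ^ 2 := by nlinarith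
    rcases eq_or_lt_of_le hN11nn with h0 | h0
    · -- degenerate case: A = ε and sφ = 0
      have hBs : 0 ≤ B ^ 2 * sφ ^ 2 := by positivity
      have hA2 : A ^ 2 = ε ^ 2 := by linarith
      have hsφ : sφ ^ 2 = 0 := by
        have hBpos : 0 < B ^ 2 := by positivity
        nlinarith
      have hsφ0 : sφ = 0 := by nlinarith [sq_nonneg sφ]
      have hcφ : cφ ^ 2 = 1 := by linarith
      have hkey : A ^ 2 * c ^ 2 + B ^ 2 * (s * cφ + c * sφ) ^ 2
          = A ^ 2 * c ^ 2 + B ^ 2 * s ^ 2 := by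
        rw [hsφ0]; linear_combination B ^ 2 * s ^ 2 * hcφ
      rw [hkey]
      nlinarith [mul_nonneg (by linarith : (0:ℝ) ≤ B ^ 2 - ε ^ 2) (sq_nonneg s),
        mul_nonneg (by linarith : (0:ℝ) ≤ A ^ 2 - ε ^ 2) (sq_nonneg c)]
    · have heq2 : (A ^ 2 - ε ^ 2 + B ^ 2 * sφ ^ 2) *
          (A ^ 2 * c ^ 2 + B ^ 2 * (s * cφ + c * sφ) ^ 2 - ε ^ 2)
          = ((A ^ 2 - ε ^ 2 + B ^ 2 * sφ ^ 2) * c + B ^ 2 * sφ * cφ * s) ^ 2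
            + (A ^ 2 * B ^ 2 * cφ ^ 2 - ε ^ 2 * (A ^ 2 + B ^ 2 - ε ^ 2)) * s ^ 2 := by
        linear_combination ((A ^ 2 - ε ^ 2 + B ^ 2 * sφ ^ 2) * ε ^ 2) * hcs
          + (-(ε ^ 2) * B ^ 2 * s ^ 2) * h1
      have hpos : 0 ≤ (A ^ 2 - ε ^ 2 + B ^ 2 * sφ ^ 2) *
          (A ^ 2 * c ^ 2 + B ^ 2 * (s * cφ + c * sφ) ^ 2 - ε ^ 2) := by
        rw [heq2]
        have := mul_nonneg (by linarith : 0 ≤ A ^ 2 * B ^ 2 * cφ ^ 2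
          - ε ^ 2 * (A ^ 2 + B ^ 2 - ε ^ 2)) (sq_nonneg s)
        nlinarith [sq_nonneg ((A ^ 2 - ε ^ 2 + B ^ 2 * sφ ^ 2) * c + B ^ 2 * sφ * cφ * s)]
      have := (mul_nonneg_iff_of_pos_left h0).mp hpos
      linarith

/-- Angular-separation (relative eccentricity/inclination separation) condition
for passive safety in the RN plane: under `ε ≤ a c34` and `ε ≤ a c56 / ρ`, the
RN separation stays at least `ε` for all `λ` iff
`|cos(θ34 - θ56)| ≥ (ε ρ/(a c34 c56)) √(c34² + (c56/ρ)² - ε²/a²)`. -/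
theorem rn_passive_safety_iff (a ρ c34 c56 θ34 θ56 ε : ℝ)
    (ha : 0 < a) (hρ : 0 < ρ) (h34 : 0 < c34) (h56 : 0 < c56) (hε : 0 < ε)
    (hε34 : ε ≤ a * c34) (hε56 : ε ≤ a * c56 / ρ) :
    (∀ lam : ℝ,
        Real.sqrt ((a * c34 * Real.cos (lam - θ34)) ^ 2 +
          ((a * c56 / ρ) * Real.sin (lam - θ56)) ^ 2) ≥ ε) ↔
      |Real.cos (θ34 - θ56)| ≥
        (ε * ρ / (a * c34 * c56)) *
          Real.sqrt (c34 ^ 2 + (c56 / ρ) ^ 2 - ε ^ 2 / a ^ 2) := by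
  set A := a * c34 with hAdef
  set B := a * c56 / ρ with hBdef
  have hA : 0 < A := by positivity
  have hB : 0 < B := by positivity
  set cφ := Real.cos (θ34 - θ56) with hcφdef
  set sφ := Real.sin (θ34 - θ56) with hsφdef
  have h1 : cφ ^ 2 + sφ ^ 2 = 1 := Real.cos_sq_add_sin_sq _
  -- Step 1: LHS ↔ quadratic form condition on the unit circle
  have step1 : (∀ lam : ℝ,
      Real.sqrt ((A * Real.cos (lam - θ34)) ^ 2 + (B * Real.sin (lam - θ56)) ^ 2) ≥ ε) ↔
      (∀ c s : ℝ, c ^ 2 + s ^ 2 = 1 →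
        ε ^ 2 ≤ A ^ 2 * c ^ 2 + B ^ 2 * (s * cφ + c * sφ) ^ 2) := by
    constructor
    · intro h c s hcs
      obtain ⟨u, hu1, hu2⟩ := exists_angle c s hcs
      have h2 := h (u + θ34)
      rw [ge_iff_le, Real.le_sqrt hε.le (by positivity)] at h2
      have e1 : Real.cos (u + θ34 - θ34) = c := by rw [add_sub_cancel_right, hu1]
      have e2 : Real.sin (u + θ34 - θ56) = s * cφ + c * sφ := by
        have e : u + θ34 - θ56 = u + (θ34 - θ56) := by ring
        rw [e, Real.sin_add, hu1, hu2]
      rw [e1, e2] at h2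
      calc ε ^ 2 ≤ (A * c) ^ 2 + (B * (s * cφ + c * sφ)) ^ 2 := h2
        _ = A ^ 2 * c ^ 2 + B ^ 2 * (s * cφ + c * sφ) ^ 2 := by ring
    · intro h lam
      rw [ge_iff_le, Real.le_sqrt hε.le (by positivity)]
      have hcs : (Real.cos (lam - θ34)) ^ 2 + (Real.sin (lam - θ34)) ^ 2 = 1 :=
        Real.cos_sq_add_sin_sq _
      have h2 := h (Real.cos (lam - θ34)) (Real.sin (lam - θ34)) hcs
      have e2 : Real.sin (lam - θ56) =
          Real.sin (lam - θ34) * cφ + Real.cos (lam - θ34) * sφ := by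
        have e : lam - θ56 = (lam - θ34) + (θ34 - θ56) := by ring
        rw [e, Real.sin_add]
      rw [e2]
      calc ε ^ 2 ≤ A ^ 2 * (Real.cos (lam - θ34)) ^ 2 +
            B ^ 2 * (Real.sin (lam - θ34) * cφ + Real.cos (lam - θ34) * sφ) ^ 2 := h2
        _ = (A * Real.cos (lam - θ34)) ^ 2 +
            (B * (Real.sin (lam - θ34) * cφ + Real.cos (lam - θ34) * sφ)) ^ 2 := by ring
  -- Step 2: RHS ↔ the algebraic condition
  have hane : a ≠ 0 := ne_of_gt ha
  have hρne : ρ ≠ 0 := ne_of_gt hρ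
  have h34ne : c34 ≠ 0 := ne_of_gt h34
  have h56ne : c56 ≠ 0 := ne_of_gt h56
  have hD : 0 ≤ c34 ^ 2 + (c56 / ρ) ^ 2 - ε ^ 2 / a ^ 2 := by
    have hεA2 : ε ^ 2 ≤ A ^ 2 := by nlinarith
    have hA2e : A ^ 2 = a ^ 2 * c34 ^ 2 := by rw [hAdef]; ring
    have h2 : ε ^ 2 / a ^ 2 ≤ c34 ^ 2 := by
      rw [div_le_iff₀ (by positivity : (0:ℝ) < a ^ 2)]; nlinarith
    have := sq_nonneg (c56 / ρ)
    linarith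
  set K := ε * ρ / (a * c34 * c56) with hKdef
  have hK : 0 < K := by positivity
  have step2 : (|cφ| ≥ K * Real.sqrt (c34 ^ 2 + (c56 / ρ) ^ 2 - ε ^ 2 / a ^ 2)) ↔
      ε ^ 2 * (A ^ 2 + B ^ 2 - ε ^ 2) ≤ A ^ 2 * B ^ 2 * cφ ^ 2 := by
    have e1 : K * Real.sqrt (c34 ^ 2 + (c56 / ρ) ^ 2 - ε ^ 2 / a ^ 2) =
        Real.sqrt (K ^ 2 * (c34 ^ 2 + (c56 / ρ) ^ 2 - ε ^ 2 / a ^ 2)) := by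
      rw [Real.sqrt_mul (sq_nonneg K), Real.sqrt_sq hK.le]
    have e2 : |cφ| = Real.sqrt (cφ ^ 2) := (Real.sqrt_sq_eq_abs cφ).symm
    rw [ge_iff_le, e1, e2, Real.sqrt_le_sqrt_iff (sq_nonneg cφ)]
    have hAB : (0:ℝ) < A ^ 2 * B ^ 2 := by positivity
    rw [← mul_le_mul_iff_right₀ hAB]
    have hM : A ^ 2 * B ^ 2 * (K ^ 2 * (c34 ^ 2 + (c56 / ρ) ^ 2 - ε ^ 2 / a ^ 2)) =
        ε ^ 2 * (A ^ 2 + B ^ 2 - ε ^ 2) := by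
      rw [hAdef, hBdef, hKdef]; field_simp
    rw [hM]
  rw [step1, step2]
  exact key_iff A B ε cφ sφ hA hB hε hε34 hε56 h1
end

section
/- Let a > 0, ρ > 0, c34 ≥ 0, θ34 ∈ ℝ and c2 ∈ ℝ with c2 ≥ (1+ρ)·c34 (the not-encircling case). Then the infimum over λ ∈ ℝ of S_RT(λ) is attained and equals (a/ρ)·c2 − a·(1/ρ + 1)·c34. -/
/-- Not-encircling case of the minimum radial/tangential (RT) separation: if
`c2 ≥ (1+ρ) c34`, the minimum over `λ` of `S_RT(λ)` is attained and equals
`(a/ρ) c2 - a (1/ρ + 1) c34`. -/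
theorem rt_min_separation_not_encircling (a ρ c34 θ34 c2 : ℝ)
    (ha : 0 < a) (hρ : 0 < ρ) (h34 : 0 ≤ c34)
    (hc2 : c2 ≥ (1 + ρ) * c34) :
    IsLeast
      (Set.range fun lam : ℝ =>
        Real.sqrt ((a * c34 * Real.cos (lam - θ34)) ^ 2 +
          ((a / ρ) * c2 + a * (1 / ρ + 1) * c34 * Real.sin (lam - θ34)) ^ 2))
      ((a / ρ) * c2 - a * (1 / ρ + 1) * c34) := by
  have hB : 0 ≤ a * (1 / ρ + 1) * c34 := by positivity
  have hAB : a * (1 / ρ + 1) * c34 ≤ (a / ρ) * c2 := by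
    have key : a * (1 / ρ + 1) * c34 * ρ = a * (1 + ρ) * c34 := by
      field_simp
    rw [div_mul_eq_mul_div, le_div_iff₀ hρ, key]
    nlinarith
  constructor
  · refine ⟨θ34 - Real.pi / 2, ?_⟩
    dsimp only
    have h1 : θ34 - Real.pi / 2 - θ34 = -(Real.pi / 2) := by ring
    rw [h1, Real.cos_neg, Real.sin_neg, Real.cos_pi_div_two, Real.sin_pi_div_two]
    rw [show a * c34 * 0 = 0 by ring, show (a / ρ) * c2 + a * (1 / ρ + 1) * c34 * -1
      = (a / ρ) * c2 - a * (1 / ρ + 1) * c34 by ring]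
    rw [show (0:ℝ)^2 + ((a / ρ) * c2 - a * (1 / ρ + 1) * c34)^2
      = ((a / ρ) * c2 - a * (1 / ρ + 1) * c34)^2 by ring]
    exact Real.sqrt_sq (by linarith)
  · rintro y ⟨lam, rfl⟩
    have hs := Real.neg_one_le_sin (lam - θ34)
    have h2 : (a / ρ) * c2 - a * (1 / ρ + 1) * c34
        ≤ (a / ρ) * c2 + a * (1 / ρ + 1) * c34 * Real.sin (lam - θ34) := by
      nlinarith
    calc (a / ρ) * c2 - a * (1 / ρ + 1) * c34
        ≤ (a / ρ) * c2 + a * (1 / ρ + 1) * c34 * Real.sin (lam - θ34) := h2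
      _ = Real.sqrt (((a / ρ) * c2 + a * (1 / ρ + 1) * c34 * Real.sin (lam - θ34)) ^ 2) := by
          rw [Real.sqrt_sq (by linarith)]
      _ ≤ _ := by
          apply Real.sqrt_le_sqrt
          nlinarith [sq_nonneg (a * c34 * Real.cos (lam - θ34))]
end

section
/- Let a > 0, ρ > 0, c34 > 0, θ34 ∈ ℝ and c2 ∈ ℝ with 0 ≤ c2 ≤ (1+2ρ)·c34/(1+ρ) (the encircling case with interior minimum). Then the infimum over λ ∈ ℝ of S_RT(λ) is attained and equals sqrt( a²·c34² − a²·c2²/(1+2ρ) ). -/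
/-- Encircling case with interior minimum of the radial/tangential (RT)
separation: if `0 ≤ c2 ≤ (1+2ρ) c34 / (1+ρ)`, the minimum over `λ` of
`S_RT(λ)` is attained and equals `√(a² c34² - a² c2² / (1+2ρ))`. -/
theorem rt_min_separation_encircling (a ρ c34 θ34 c2 : ℝ)
    (ha : 0 < a) (hρ : 0 < ρ) (h34 : 0 < c34)
    (hc2 : 0 ≤ c2) (hc2' : c2 ≤ (1 + 2 * ρ) * c34 / (1 + ρ)) :
    IsLeast
      (Set.range fun lam : ℝ =>
        Real.sqrt ((a * c34 * Real.cos (lam - θ34)) ^ 2 +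
          ((a / ρ) * c2 + a * (1 / ρ + 1) * c34 * Real.sin (lam - θ34)) ^ 2))
      (Real.sqrt (a ^ 2 * c34 ^ 2 - a ^ 2 * c2 ^ 2 / (1 + 2 * ρ))) := by
  have h2ρ : (0:ℝ) < 1 + 2 * ρ := by linarith
  have h1ρ : (0:ℝ) < 1 + ρ := by linarith
  have hden : (0:ℝ) < c34 * (1 + 2 * ρ) := by positivity
  have hnum : c2 * (1 + ρ) ≤ c34 * (1 + 2 * ρ) := by
    rw [le_div_iff₀ h1ρ] at hc2'
    nlinarith
  set s : ℝ := -(c2 * (1 + ρ)) / (c34 * (1 + 2 * ρ)) with hs_def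
  have hs1 : -1 ≤ s := by
    rw [hs_def, neg_div, neg_le_neg_iff, div_le_one hden]
    exact hnum
  have hs0 : s ≤ 1 := by
    have : s ≤ 0 := by
      rw [hs_def, neg_div]
      simp only [neg_nonpos]
      positivity
    linarith
  -- key algebraic identity
  have hg : ∀ lam : ℝ,
      (a * c34 * Real.cos (lam - θ34)) ^ 2 +
        ((a / ρ) * c2 + a * (1 / ρ + 1) * c34 * Real.sin (lam - θ34)) ^ 2 =
      (a ^ 2 * c34 ^ 2 - a ^ 2 * c2 ^ 2 / (1 + 2 * ρ)) +
        a ^ 2 * (Real.sin (lam - θ34) * (c34 * (1 + 2 * ρ)) + c2 * (1 + ρ)) ^ 2 /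
          (ρ ^ 2 * (1 + 2 * ρ)) := by
    intro lam
    have hc : Real.cos (lam - θ34) ^ 2 = 1 - Real.sin (lam - θ34) ^ 2 :=
      Real.cos_sq' (lam - θ34)
    have h1 : (a * c34 * Real.cos (lam - θ34)) ^ 2
        = a ^ 2 * c34 ^ 2 * (1 - Real.sin (lam - θ34) ^ 2) := by
      rw [show (a * c34 * Real.cos (lam - θ34)) ^ 2
          = a ^ 2 * c34 ^ 2 * Real.cos (lam - θ34) ^ 2 by ring, hc]
    rw [h1]
    field_simp
    ring
  constructor
  · refine ⟨θ34 + Real.arcsin s, ?_⟩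
    simp only
    rw [hg]
    have hsin : Real.sin (θ34 + Real.arcsin s - θ34) = s := by
      rw [show θ34 + Real.arcsin s - θ34 = Real.arcsin s by ring]
      exact Real.sin_arcsin hs1 hs0
    rw [hsin]
    have hzero : s * (c34 * (1 + 2 * ρ)) + c2 * (1 + ρ) = 0 := by
      rw [hs_def, div_mul_cancel₀]
      · ring
      · exact ne_of_gt hden
    rw [hzero]
    norm_num
  · rintro x ⟨lam, rfl⟩
    simp only
    rw [hg]
    apply Real.sqrt_le_sqrt
    have : 0 ≤ a ^ 2 * (Real.sin (lam - θ34) * (c34 * (1 + 2 * ρ)) + c2 * (1 + ρ)) ^ 2 /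
        (ρ ^ 2 * (1 + 2 * ρ)) := by positivity
    linarith
end

section
/- Let a > 0, ρ > 0, ε > 0, θ34 ∈ ℝ and c34, c2 ∈ ℝ with ε/a ≤ c34 ≤ ((1+ρ)/ρ)·(ε/a) and |c2| ≤ sqrt( (1+2ρ)·(c34² − ε²/a²) ). Then S_RT(λ) ≥ ε for all λ ∈ ℝ. -/
/-- First encircling-case sufficient condition for passive safety in the RT
plane: if `ε/a ≤ c34 ≤ ((1+ρ)/ρ)(ε/a)` and
`|c2| ≤ √((1+2ρ)(c34² - ε²/a²))`, then `S_RT(λ) ≥ ε` for all `λ`. -/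
theorem rt_passive_safety_encircling_first (a ρ ε θ34 c34 c2 : ℝ)
    (ha : 0 < a) (hρ : 0 < ρ) (hε : 0 < ε)
    (h1 : ε / a ≤ c34) (h2 : c34 ≤ ((1 + ρ) / ρ) * (ε / a))
    (hc2 : |c2| ≤ Real.sqrt ((1 + 2 * ρ) * (c34 ^ 2 - ε ^ 2 / a ^ 2))) :
    ∀ lam : ℝ,
      Real.sqrt ((a * c34 * Real.cos (lam - θ34)) ^ 2 +
        ((a / ρ) * c2 + a * (1 / ρ + 1) * c34 * Real.sin (lam - θ34)) ^ 2) ≥ ε := by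
  intro lam
  set s := Real.sin (lam - θ34) with hs
  set c := Real.cos (lam - θ34) with hc
  have hcs : c ^ 2 = 1 - s ^ 2 := by
    have := Real.sin_sq_add_cos_sq (lam - θ34)
    rw [← hs, ← hc] at this; linarith
  have hεa : 0 < ε / a := div_pos hε ha
  have h1' : (ε / a) ^ 2 ≤ c34 ^ 2 := pow_le_pow_left₀ hεa.le h1 2
  rw [div_pow] at h1'
  have hR : 0 ≤ (1 + 2 * ρ) * (c34 ^ 2 - ε ^ 2 / a ^ 2) :=
    mul_nonneg (by linarith) (by linarith)
  have hc2sq : c2 ^ 2 ≤ (1 + 2 * ρ) * (c34 ^ 2 - ε ^ 2 / a ^ 2) := by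
    calc c2 ^ 2 = |c2| ^ 2 := (sq_abs c2).symm
      _ ≤ (Real.sqrt ((1 + 2 * ρ) * (c34 ^ 2 - ε ^ 2 / a ^ 2))) ^ 2 :=
          pow_le_pow_left₀ (abs_nonneg _) hc2 2
      _ = _ := Real.sq_sqrt hR
  have ha2 : (0:ℝ) < a ^ 2 := by positivity
  have haε : a ^ 2 * (ε ^ 2 / a ^ 2) = ε ^ 2 := by field_simp
  have hc2sq' : a ^ 2 * c2 ^ 2 ≤ (1 + 2 * ρ) * (a ^ 2 * c34 ^ 2 - ε ^ 2) := by
    have h := mul_le_mul_of_nonneg_left hc2sq ha2.le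
    nlinarith [h]
  -- minimum of the quadratic in s, scaled by ρ^2
  have hY : ρ ^ 2 * ε ^ 2 ≤
      (a * c34 * ρ) ^ 2 * (1 - s ^ 2) + (a * (c2 + (1 + ρ) * c34 * s)) ^ 2 := by
    have h12 : (0:ℝ) < 1 + 2 * ρ := by linarith
    nlinarith [mul_le_mul_of_nonneg_left hc2sq' (sq_nonneg ρ),
      sq_nonneg (a * ((1 + 2 * ρ) * c34 * s + (1 + ρ) * c2)), h12]
  have key : ρ ^ 2 * ((a * c34 * c) ^ 2 + ((a / ρ) * c2 + a * (1 / ρ + 1) * c34 * s) ^ 2)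
      = (a * c34 * ρ) ^ 2 * c ^ 2 + (a * (c2 + (1 + ρ) * c34 * s)) ^ 2 := by
    field_simp
  have hρ2 : (0:ℝ) < ρ ^ 2 := by positivity
  have hXε : ε ^ 2 ≤ (a * c34 * c) ^ 2 + ((a / ρ) * c2 + a * (1 / ρ + 1) * c34 * s) ^ 2 := by
    rw [← mul_le_mul_iff_right₀ hρ2, key, hcs]
    exact hY
  rw [ge_iff_le, show ε = Real.sqrt (ε ^ 2) by rw [Real.sqrt_sq hε.le]]
  exact Real.sqrt_le_sqrt hXε
end

section
/- Let a > 0, 0 < ρ ≤ 1, ε > 0, θ34 ∈ ℝ and c34, c2 ∈ ℝ with c34 ≥ ((1+ρ)/ρ)·(ε/a) and |c2| ≤ (1+ρ)·c34 − ε/a. Then S_RT(λ) ≥ ε for all λ ∈ ℝ. -/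
set_option maxHeartbeats 1000000 in
private lemma rt_aux (P Q R ε s c : ℝ) (hε : 0 < ε) (hP0 : 0 ≤ P) (hPQ : P ≤ Q)
    (hP2 : ε * Q ≤ P ^ 2) (hR : |R| ≤ Q - ε) (hsc : s ^ 2 + c ^ 2 = 1) :
    ε ^ 2 ≤ P ^ 2 * c ^ 2 + (R + Q * s) ^ 2 := by
  have hQ : 0 < Q := lt_of_lt_of_le hε (by nlinarith [abs_nonneg R])
  have hRabs : -(Q - ε) ≤ R ∧ R ≤ Q - ε := abs_le.mp hR
  have hPQ2 : P ^ 2 ≤ Q ^ 2 := by nlinarith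
  have hQ2P2 : 0 ≤ Q ^ 2 - P ^ 2 := by linarith
  have hs2 : s ^ 2 ≤ 1 := by nlinarith [sq_nonneg c]
  have hs1 : -1 ≤ s := by nlinarith
  have hs1' : s ≤ 1 := by nlinarith
  have hcc : c ^ 2 = 1 - s ^ 2 := by linarith
  rcases le_or_gt (Q * |R|) (Q ^ 2 - P ^ 2) with hcase | hcase
  · -- interior case
    have hQR2 : Q ^ 2 * R ^ 2 ≤ (Q ^ 2 - P ^ 2) ^ 2 := by
      have h0 : 0 ≤ Q * |R| := by positivity
      calc Q ^ 2 * R ^ 2 = (Q * |R|) ^ 2 := by rw [mul_pow, sq_abs]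
        _ ≤ (Q ^ 2 - P ^ 2) ^ 2 := by nlinarith [mul_self_le_mul_self h0 hcase]
    rcases eq_or_lt_of_le hPQ2 with heq | hlt
    · -- degenerate: P² = Q², forcing R = 0
      have hR2 : R ^ 2 = 0 := by
        have hQQ : 0 < Q ^ 2 := by positivity
        have h1 : R ^ 2 ≤ 0 := by nlinarith [hQQ, hQR2, heq]
        exact le_antisymm h1 (sq_nonneg R)
      have hR0 : R = 0 := by
        have := sq_eq_zero_iff.mp hR2
        exact this
      have hεQ : ε ≤ Q := by linarith [abs_nonneg R]
      rw [hcc, hR0]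
      nlinarith [heq]
    · have e1 : (P ^ 2 * c ^ 2 + (R + Q * s) ^ 2) * (Q ^ 2 * (Q ^ 2 - P ^ 2)) =
          Q ^ 2 * ((Q ^ 2 - P ^ 2) * s + Q * R) ^ 2 +
            P ^ 2 * (Q ^ 2 * (Q ^ 2 - P ^ 2) - Q ^ 2 * R ^ 2) := by
        rw [hcc]; ring
      have e2 : P ^ 2 * (Q ^ 2 - P ^ 2) ≤ Q ^ 2 * (Q ^ 2 - P ^ 2) - Q ^ 2 * R ^ 2 := by
        nlinarith [hQR2]
      have e4 : P ^ 2 * (P ^ 2 * (Q ^ 2 - P ^ 2)) ≤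
          P ^ 2 * (Q ^ 2 * (Q ^ 2 - P ^ 2) - Q ^ 2 * R ^ 2) :=
        mul_le_mul_of_nonneg_left e2 (sq_nonneg P)
      have e3 : (ε * Q) ^ 2 ≤ (P ^ 2) ^ 2 :=
        mul_self_le_mul_self (by positivity) hP2 |>.trans_eq (by ring) |>.trans_eq' (by ring)
      have e5 : (ε * Q) ^ 2 * (Q ^ 2 - P ^ 2) ≤ (P ^ 2) ^ 2 * (Q ^ 2 - P ^ 2) :=
        mul_le_mul_of_nonneg_right e3 hQ2P2
      have e6 : 0 ≤ Q ^ 2 * ((Q ^ 2 - P ^ 2) * s + Q * R) ^ 2 := by positivity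
      have key : ε ^ 2 * (Q ^ 2 * (Q ^ 2 - P ^ 2)) ≤
          (P ^ 2 * c ^ 2 + (R + Q * s) ^ 2) * (Q ^ 2 * (Q ^ 2 - P ^ 2)) := by
        calc ε ^ 2 * (Q ^ 2 * (Q ^ 2 - P ^ 2)) = (ε * Q) ^ 2 * (Q ^ 2 - P ^ 2) := by ring
          _ ≤ (P ^ 2) ^ 2 * (Q ^ 2 - P ^ 2) := e5
          _ = P ^ 2 * (P ^ 2 * (Q ^ 2 - P ^ 2)) := by ring
          _ ≤ P ^ 2 * (Q ^ 2 * (Q ^ 2 - P ^ 2) - Q ^ 2 * R ^ 2) := e4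
          _ ≤ Q ^ 2 * ((Q ^ 2 - P ^ 2) * s + Q * R) ^ 2 +
              P ^ 2 * (Q ^ 2 * (Q ^ 2 - P ^ 2) - Q ^ 2 * R ^ 2) := by linarith [e6]
          _ = (P ^ 2 * c ^ 2 + (R + Q * s) ^ 2) * (Q ^ 2 * (Q ^ 2 - P ^ 2)) := e1.symm
      have hM : 0 < Q ^ 2 * (Q ^ 2 - P ^ 2) :=
        mul_pos (by positivity) (by linarith)
      exact le_of_mul_le_mul_right key hM
  · -- boundary case
    rcases le_or_gt 0 R with hRpos | hRneg
    · rw [abs_of_nonneg hRpos] at hcase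
      have hE : (Q ^ 2 - P ^ 2) * (s + 1) ≤ (Q ^ 2 - P ^ 2) * (s - 1) + 2 * Q * R := by
        nlinarith
      have h2 := mul_le_mul_of_nonneg_left hE (show (0:ℝ) ≤ s + 1 by linarith)
      have h1 : (0:ℝ) ≤ (s + 1) * ((Q ^ 2 - P ^ 2) * (s - 1) + 2 * Q * R) := by
        nlinarith [h2, mul_nonneg (sq_nonneg (s + 1)) hQ2P2]
      have hq : (0:ℝ) ≤ (Q - R - ε) * (Q - R + ε) :=
        mul_nonneg (by linarith [hRabs.2]) (by linarith [hRabs.2])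
      rw [hcc]
      nlinarith [h1, hq]
    · rw [abs_of_neg hRneg] at hcase
      have hE : (Q ^ 2 - P ^ 2) * (1 - s) ≤ (Q ^ 2 - P ^ 2) * (-s - 1) - 2 * Q * R := by
        nlinarith
      have h2 := mul_le_mul_of_nonneg_left hE (show (0:ℝ) ≤ 1 - s by linarith)
      have h1 : (0:ℝ) ≤ (1 - s) * ((Q ^ 2 - P ^ 2) * (-s - 1) - 2 * Q * R) := by
        nlinarith [h2, mul_nonneg (sq_nonneg (1 - s)) hQ2P2]
      have hq : (0:ℝ) ≤ (Q + R - ε) * (Q + R + ε) :=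
        mul_nonneg (by linarith [hRabs.1]) (by linarith [hRabs.1])
      rw [hcc]
      nlinarith [h1, hq]

set_option maxHeartbeats 1000000 in
/-- Second encircling-case sufficient condition for passive safety in the RT
plane: if `c34 ≥ ((1+ρ)/ρ)(ε/a)` and `|c2| ≤ (1+ρ) c34 - ε/a` (with
`0 < ρ ≤ 1`), then `S_RT(λ) ≥ ε` for all `λ`. -/
theorem rt_passive_safety_encircling_second (a ρ ε θ34 c34 c2 : ℝ)
    (ha : 0 < a) (hρ : 0 < ρ) (hρ1 : ρ ≤ 1) (hε : 0 < ε)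
    (h1 : c34 ≥ ((1 + ρ) / ρ) * (ε / a))
    (hc2 : |c2| ≤ (1 + ρ) * c34 - ε / a) :
    ∀ lam : ℝ,
      Real.sqrt ((a * c34 * Real.cos (lam - θ34)) ^ 2 +
        ((a / ρ) * c2 + a * (1 / ρ + 1) * c34 * Real.sin (lam - θ34)) ^ 2) ≥ ε := by
  intro lam
  set s := Real.sin (lam - θ34) with hs
  set c := Real.cos (lam - θ34) with hc
  clear_value s c
  have hsc : s ^ 2 + c ^ 2 = 1 := by rw [hs, hc]; exact Real.sin_sq_add_cos_sq _
  have hc34pos : 0 < c34 :=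
    lt_of_lt_of_le (by positivity : (0:ℝ) < ((1 + ρ)/ρ) * (ε/a)) h1
  have hP : 0 < a * c34 := by positivity
  have hPQ : a * c34 ≤ a * ((1 + ρ) * c34) := by nlinarith
  have h1' : (1 + ρ) * ε ≤ ρ * (a * c34) := by
    rw [ge_iff_le, div_mul_div_comm, div_le_iff₀ (by positivity)] at h1
    nlinarith [h1]
  have h1'' : (1 + ρ) * ε ≤ a * c34 := by
    nlinarith [mul_nonneg (sub_nonneg.mpr hρ1) hP.le]
  have hP2 : ε * (a * ((1 + ρ) * c34)) ≤ (a * c34) ^ 2 := by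
    nlinarith [mul_le_mul_of_nonneg_right h1'' hP.le]
  have hea : a * (ε / a) = ε := by field_simp
  have hR : |a * c2| ≤ a * ((1 + ρ) * c34) - ε := by
    rw [abs_mul, abs_of_pos ha]
    have h3 := mul_le_mul_of_nonneg_left hc2 ha.le
    nlinarith [h3, hea]
  have key := rt_aux (a * c34) (a * ((1 + ρ) * c34)) (a * c2) ε s c hε hP.le hPQ hP2 hR hsc
  have htan : (a * c2 + a * ((1 + ρ) * c34) * s) ^ 2 ≤
      ((a / ρ) * c2 + a * (1 / ρ + 1) * c34 * s) ^ 2 := by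
    have heq2 : ((a / ρ) * c2 + a * (1 / ρ + 1) * c34 * s) * ρ =
        a * c2 + a * ((1 + ρ) * c34) * s := by
      field_simp
    have heq3 : (a * c2 + a * ((1 + ρ) * c34) * s) ^ 2 =
        ((a / ρ) * c2 + a * (1 / ρ + 1) * c34 * s) ^ 2 * ρ ^ 2 := by
      rw [← heq2]; ring
    rw [heq3]
    have hρ2 : ρ ^ 2 ≤ 1 := by nlinarith
    nlinarith [sq_nonneg ((a / ρ) * c2 + a * (1 / ρ + 1) * c34 * s)]
  have hfinal : ε ^ 2 ≤ (a * c34 * c) ^ 2 +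
      ((a / ρ) * c2 + a * (1 / ρ + 1) * c34 * s) ^ 2 := by
    have hx : (a * c34 * c) ^ 2 = (a * c34) ^ 2 * c ^ 2 := by ring
    linarith [key, htan, hx]
  rw [ge_iff_le, ← Real.sqrt_sq hε.le]
  exact Real.sqrt_le_sqrt hfinal
end

section
/- Let a > 0, 0 < ρ ≤ 1, ε > 0, θ34 ∈ ℝ and c34, c2 ∈ ℝ with c34 ≥ 0 and |c2| ≥ (1+ρ)·c34 + ε/a. Then S_RT(λ) ≥ ε for all λ ∈ ℝ. -/
/-- Not-encircling sufficient condition for passive safety in the RT plane: if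
`|c2| ≥ (1+ρ) c34 + ε/a` (with `0 < ρ ≤ 1` and `c34 ≥ 0`), then
`S_RT(λ) ≥ ε` for all `λ`. -/
theorem rt_passive_safety_not_encircling (a ρ ε θ34 c34 c2 : ℝ)
    (ha : 0 < a) (hρ : 0 < ρ) (hρ1 : ρ ≤ 1) (hε : 0 < ε)
    (h34 : 0 ≤ c34) (hc2 : |c2| ≥ (1 + ρ) * c34 + ε / a) :
    ∀ lam : ℝ,
      Real.sqrt ((a * c34 * Real.cos (lam - θ34)) ^ 2 +
        ((a / ρ) * c2 + a * (1 / ρ + 1) * c34 * Real.sin (lam - θ34)) ^ 2) ≥ ε := by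
  intro lam
  set x := a * c34 * Real.cos (lam - θ34) with hx
  set u := (a / ρ) * c2 with hu
  set v := a * (1 / ρ + 1) * c34 * Real.sin (lam - θ34) with hv
  have h1 : Real.sqrt ((u + v) ^ 2) ≤ Real.sqrt (x ^ 2 + (u + v) ^ 2) := by
    apply Real.sqrt_le_sqrt; nlinarith [sq_nonneg x]
  rw [Real.sqrt_sq_eq_abs] at h1
  have habs : |u| - |v| ≤ |u + v| := by
    have := abs_add_le (u + v) (-v)
    simp at this
    linarith [abs_neg v ▸ this]
  have hu' : |u| = (a / ρ) * |c2| := by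
    rw [hu, abs_mul, abs_of_pos (div_pos ha hρ)]
  have hv' : |v| ≤ a * (1 / ρ + 1) * c34 := by
    rw [hv, abs_mul]
    have h2 : |a * (1 / ρ + 1) * c34| = a * (1 / ρ + 1) * c34 := by
      apply abs_of_nonneg
      positivity
    rw [h2]
    nth_rewrite 2 [← mul_one (a * (1 / ρ + 1) * c34)]
    apply mul_le_mul_of_nonneg_left (Real.abs_sin_le_one _) (by positivity)
  have key : ε ≤ |u + v| := by
    have hεa : (a / ρ) * (ε / a) = ε / ρ := by field_simp
    have hc : (a / ρ) * |c2| ≥ (a / ρ) * ((1 + ρ) * c34 + ε / a) := by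
      apply mul_le_mul_of_nonneg_left hc2 (le_of_lt (div_pos ha hρ))
    have hε' : ε ≤ ε / ρ := by
      rw [le_div_iff₀ hρ]; nlinarith
    have hrw : (a / ρ) * ((1 + ρ) * c34) = a * (1 / ρ + 1) * c34 := by
      field_simp
    nlinarith
  linarith
end

section
/- Let 0 ≤ e < 1, a > 0, ε > 0, θ34 ∈ ℝ, and c34,min > 0 with c34,min ≥ ε/a. Let c2k, c2j ∈ ℝ and c34 ≥ c34,min, and assume either (i) ε/a ≤ c34,min < ((2−e)/(1−e))·(ε/a) and both |c2k| ≤ sqrt( ((3−2e)/4)·(c34,min² − ε²/a²) ) and |c2j| ≤ sqrt( ((3−2e)/4)·(c34,min² − ε²/a²) ), or (ii) c34,min ≥ ((2−e)/(1−e))·(ε/a) and both |c2k| ≤ ((2−e)/2)·c34,min − ε/(2a) and |c2j| ≤ ((2−e)/2)·c34,min − ε/(2a). Then, with c2 = c2k − c2j, for every ρ ∈ [1−e, 1+e] and every λ ∈ ℝ, S_RT(λ; ρ) ≥ ε. -/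
set_option maxHeartbeats 1000000

/-- If the "interior/global minimum" condition holds, the scaled separation
squared is at least `ρ²ε²`. -/
lemma swarm_rt_key_aux (a ε ρ c2 m s : ℝ) (hρ : 0 < ρ)
    (key : a ^ 2 * c2 ^ 2 ≤ (1 + 2 * ρ) * (a ^ 2 * m ^ 2 - ε ^ 2)) :
    ρ ^ 2 * ε ^ 2 ≤ a ^ 2 * m ^ 2 * ρ ^ 2 * (1 - s ^ 2) +
      a ^ 2 * (c2 + (1 + ρ) * m * s) ^ 2 := by
  nlinarith [sq_nonneg ((1 + 2 * ρ) * m * s + (1 + ρ) * c2),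
    mul_nonneg (sq_nonneg ρ) (sub_nonneg.2 key), sq_nonneg a, sq_nonneg ρ, hρ.le]

/-- Endpoint case: if the minimizer lies outside `[-1,1]` and the endpoint
value clears `ρε`, the scaled separation squared is at least `ρ²ε²`. -/
lemma swarm_rt_end_aux (a ε ρ c2 m s : ℝ) (ha : 0 < a) (hρ : 0 < ρ) (hm : 0 < m)
    (hε : 0 ≤ ε) (hs1 : |s| ≤ 1)
    (hcond : m * (1 + 2 * ρ) ≤ (1 + ρ) * |c2|)
    (hend : ρ * ε ≤ a * ((1 + ρ) * m - |c2|)) :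
    ρ ^ 2 * ε ^ 2 ≤ a ^ 2 * m ^ 2 * ρ ^ 2 * (1 - s ^ 2) +
      a ^ 2 * (c2 + (1 + ρ) * m * s) ^ 2 := by
  have hE2 : (ρ * ε) ^ 2 ≤ (a * ((1 + ρ) * m - |c2|)) ^ 2 :=
    pow_le_pow_left₀ (by positivity) hend 2
  have hrt : ((1 + ρ) * m * |s| - |c2|) ^ 2 ≤ (c2 + (1 + ρ) * m * s) ^ 2 := by
    have h2 : -(|s| * |c2|) ≤ s * c2 := by
      rw [← abs_mul]; exact neg_abs_le _
    have h3 : ((1 + ρ) * m) ^ 2 * (s ^ 2 - |s| ^ 2) = 0 := by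
      rw [sq_abs]; ring
    have h4 : (0:ℝ) ≤ (1 + ρ) * m * (s * c2 + |s| * |c2|) :=
      mul_nonneg (mul_nonneg (by linarith) hm.le) (by linarith)
    have h5 : |c2| ^ 2 = c2 ^ 2 := sq_abs c2
    linarith [h3, h4, h5]
  have h2 : 0 ≤ (1 - |s|) *
      (m * (2 * (1 + ρ) * |c2| - m * (1 + |s|) * (1 + 2 * ρ))) := by
    apply mul_nonneg (by linarith)
    apply mul_nonneg hm.le
    have hp : (0:ℝ) ≤ m * (1 + 2 * ρ) * (1 - |s|) :=
      mul_nonneg (mul_nonneg hm.le (by linarith)) (by linarith)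
    nlinarith [hcond, hp]
  have hA := mul_le_mul_of_nonneg_left hrt (sq_nonneg a)
  have hB := mul_nonneg (sq_nonneg a) h2
  have hD : a ^ 2 * m ^ 2 * ρ ^ 2 * s ^ 2 = a ^ 2 * m ^ 2 * ρ ^ 2 * |s| ^ 2 := by
    rw [sq_abs]
  nlinarith [hE2, hA, hB, hD]

/-- Main algebraic inequality, abstract form. -/
lemma swarm_rt_main (e a ε ρ c34min c2k c2j c34 s : ℝ)
    (he0 : 0 ≤ e) (he1 : e < 1) (ha : 0 < a) (hε : 0 < ε)
    (hmin : 0 < c34min) (hminε : c34min ≥ ε / a) (hc34 : c34 ≥ c34min)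
    (hcase :
      (ε / a ≤ c34min ∧ c34min < ((2 - e) / (1 - e)) * (ε / a) ∧
        |c2k| ≤ Real.sqrt (((3 - 2 * e) / 4) * (c34min ^ 2 - ε ^ 2 / a ^ 2)) ∧
        |c2j| ≤ Real.sqrt (((3 - 2 * e) / 4) * (c34min ^ 2 - ε ^ 2 / a ^ 2))) ∨
      (c34min ≥ ((2 - e) / (1 - e)) * (ε / a) ∧
        |c2k| ≤ ((2 - e) / 2) * c34min - ε / (2 * a) ∧
        |c2j| ≤ ((2 - e) / 2) * c34min - ε / (2 * a)))
    (hρ1 : 1 - e ≤ ρ) (hρ2 : ρ ≤ 1 + e) (hs1 : |s| ≤ 1) :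
    ρ ^ 2 * ε ^ 2 ≤ a ^ 2 * c34 ^ 2 * ρ ^ 2 * (1 - s ^ 2) +
      a ^ 2 * ((c2k - c2j) + (1 + ρ) * c34 * s) ^ 2 := by
  have h1e : 0 < 1 - e := by linarith
  have hρ0 : 0 < ρ := lt_of_lt_of_le h1e hρ1
  have hm : 0 < c34 := lt_of_lt_of_le hmin hc34
  have haε : ε ≤ a * c34min := by
    rw [ge_iff_le, div_le_iff₀ ha] at hminε; linarith [hminε]
  have hmsq : c34min ^ 2 ≤ c34 ^ 2 := pow_le_pow_left₀ hmin.le hc34 2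
  rcases hcase with ⟨_, _, hk, hj⟩ | ⟨hm2, hk, hj⟩
  · -- case (i)
    have hQ0 : 0 ≤ ((3 - 2 * e) / 4) * (c34min ^ 2 - ε ^ 2 / a ^ 2) := by
      have h1 : ε ^ 2 / a ^ 2 ≤ c34min ^ 2 := by
        rw [div_le_iff₀ (by positivity)]
        nlinarith [haε, hε.le, hmin.le]
      have : (0:ℝ) ≤ (3 - 2 * e) / 4 := by linarith
      exact mul_nonneg this (by linarith)
    have hksq : c2k ^ 2 ≤ ((3 - 2 * e) / 4) * (c34min ^ 2 - ε ^ 2 / a ^ 2) := by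
      have := pow_le_pow_left₀ (abs_nonneg c2k) hk 2
      rwa [sq_abs, Real.sq_sqrt hQ0] at this
    have hjsq : c2j ^ 2 ≤ ((3 - 2 * e) / 4) * (c34min ^ 2 - ε ^ 2 / a ^ 2) := by
      have := pow_le_pow_left₀ (abs_nonneg c2j) hj 2
      rwa [sq_abs, Real.sq_sqrt hQ0] at this
    have hfs : a ^ 2 * (4 * (((3 - 2 * e) / 4) * (c34min ^ 2 - ε ^ 2 / a ^ 2))) =
        (3 - 2 * e) * (a ^ 2 * c34min ^ 2 - ε ^ 2) := by
      field_simp; try ring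
    have key : a ^ 2 * (c2k - c2j) ^ 2 ≤ (1 + 2 * ρ) * (a ^ 2 * c34 ^ 2 - ε ^ 2) := by
      have hc2sq : (c2k - c2j) ^ 2 ≤
          4 * (((3 - 2 * e) / 4) * (c34min ^ 2 - ε ^ 2 / a ^ 2)) := by
        nlinarith [sq_nonneg (c2k + c2j), hksq, hjsq]
      have h4 : a ^ 2 * (c2k - c2j) ^ 2 ≤ (3 - 2 * e) * (a ^ 2 * c34min ^ 2 - ε ^ 2) := by
        have := mul_le_mul_of_nonneg_left hc2sq (sq_nonneg a)
        linarith [hfs]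
      have hnn : 0 ≤ a ^ 2 * c34min ^ 2 - ε ^ 2 := by nlinarith [haε, hε.le]
      have hmm : a ^ 2 * c34min ^ 2 - ε ^ 2 ≤ a ^ 2 * c34 ^ 2 - ε ^ 2 := by
        nlinarith [mul_le_mul_of_nonneg_left hmsq (sq_nonneg a)]
      have h5 : (3 - 2 * e) * (a ^ 2 * c34min ^ 2 - ε ^ 2) ≤
          (1 + 2 * ρ) * (a ^ 2 * c34min ^ 2 - ε ^ 2) := by
        nlinarith [mul_nonneg (by linarith : (0:ℝ) ≤ 2 * ρ - 2 + 2 * e) hnn]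
      have h6 : (1 + 2 * ρ) * (a ^ 2 * c34min ^ 2 - ε ^ 2) ≤
          (1 + 2 * ρ) * (a ^ 2 * c34 ^ 2 - ε ^ 2) :=
        mul_le_mul_of_nonneg_left hmm (by linarith)
      linarith
    exact swarm_rt_key_aux a ε ρ (c2k - c2j) c34 s hρ0 key
  · -- case (ii)
    have hc2abs : |c2k - c2j| ≤ (2 - e) * c34min - ε / a := by
      calc |c2k - c2j| ≤ |c2k| + |c2j| := abs_sub c2k c2j
        _ ≤ 2 * (((2 - e) / 2) * c34min - ε / (2 * a)) := by linarith
        _ = (2 - e) * c34min - ε / a := by field_simp; try ring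
    have hmin2 : (2 - e) * ε ≤ (1 - e) * (a * c34min) := by
      have h := mul_le_mul_of_nonneg_right hm2.le ha.le
      have h2 : (2 - e) / (1 - e) * (ε / a) * a = (2 - e) / (1 - e) * ε := by
        field_simp; try ring
      rw [h2] at h
      have h3 := mul_le_mul_of_nonneg_left h h1e.le
      have h4 : (1 - e) * ((2 - e) / (1 - e) * ε) = (2 - e) * ε := by
        field_simp; try ring
      rw [h4] at h3
      nlinarith [h3]
    rcases le_or_gt ((1 + ρ) * |c2k - c2j|) (c34 * (1 + 2 * ρ)) with hcond | hcond
    · -- subcase (ii-a)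
      have hq : ε * (1 + ρ) ≤ a * c34 * ρ := by
        nlinarith [mul_le_mul_of_nonneg_left hmin2 hρ0.le, hε.le, hρ1,
          mul_le_mul_of_nonneg_left hc34 (by positivity : (0:ℝ) ≤ (1 - e) * a * ρ)]
      have hq2 : (ε * (1 + ρ)) ^ 2 ≤ (a * c34 * ρ) ^ 2 :=
        pow_le_pow_left₀ (by positivity) hq 2
      have hcond2 : ((1 + ρ) * |c2k - c2j|) ^ 2 ≤ (c34 * (1 + 2 * ρ)) ^ 2 :=
        pow_le_pow_left₀ (by positivity) hcond 2
      have key : a ^ 2 * (c2k - c2j) ^ 2 ≤ (1 + 2 * ρ) * (a ^ 2 * c34 ^ 2 - ε ^ 2) := by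
        have hmul : (1 + ρ) ^ 2 * (a ^ 2 * (c2k - c2j) ^ 2) ≤
            (1 + ρ) ^ 2 * ((1 + 2 * ρ) * (a ^ 2 * c34 ^ 2 - ε ^ 2)) := by
          have hsq2 : a ^ 2 * ((1 + ρ) * |c2k - c2j|) ^ 2 =
              (1 + ρ) ^ 2 * (a ^ 2 * (c2k - c2j) ^ 2) := by
            rw [mul_pow, sq_abs]; ring
          have hq2mul : 0 ≤ (1 + 2 * ρ) * ((a * c34 * ρ) ^ 2 - (ε * (1 + ρ)) ^ 2) :=
            mul_nonneg (by linarith) (by linarith [hq2])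
          linarith [mul_le_mul_of_nonneg_left hcond2 (sq_nonneg a), hq2mul, hsq2]
        exact le_of_mul_le_mul_left hmul (by positivity)
      exact swarm_rt_key_aux a ε ρ (c2k - c2j) c34 s hρ0 key
    · -- subcase (ii-b)
      have hend : ρ * ε ≤ a * ((1 + ρ) * c34 - |c2k - c2j|) := by
        have h1 : |c2k - c2j| ≤ (2 - e) * c34 - ε / a := by
          nlinarith [hc2abs, hc34, he0, he1]
        have h2 : ε / a ≤ c34 := le_trans hminε hc34
        have h3 : (ρ - 1 + e) * (ε / a) + ε / a ≤ (1 + ρ) * c34 - |c2k - c2j| := by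
          nlinarith [h1, h2, hρ1, mul_le_mul_of_nonneg_left h2 (by linarith : (0:ℝ) ≤ ρ - 1 + e)]
        have h5 : a * ((ρ + e) * (ε / a)) = (ρ + e) * ε := by field_simp; try ring
        nlinarith [mul_le_mul_of_nonneg_left h3 ha.le, h5, hε.le,
          mul_nonneg he0 hε.le]
      exact swarm_rt_end_aux a ε ρ (c2k - c2j) c34 s ha hρ0 hm hε.le hs1 hcond.le hend

set_option maxHeartbeats 800000 in
/-- High-density swarm design theorem in eccentric orbits: for a pair of swarm
members with lattice separation `c34 ≥ c34min` and along-track offsets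
`c2k, c2j` bounded by either of the two encircling conditions evaluated at the
apogee, the pair (with `c2 = c2k - c2j`) is passively safe of at least `ε` in
the RT plane for every `ρ ∈ [1-e, 1+e]`. -/
theorem high_density_swarm_rt_safety (e a ε θ34 c34min c2k c2j c34 : ℝ)
    (he0 : 0 ≤ e) (he1 : e < 1) (ha : 0 < a) (hε : 0 < ε)
    (hmin : 0 < c34min) (hminε : c34min ≥ ε / a) (hc34 : c34 ≥ c34min)
    (hcase :
      (ε / a ≤ c34min ∧ c34min < ((2 - e) / (1 - e)) * (ε / a) ∧
        |c2k| ≤ Real.sqrt (((3 - 2 * e) / 4) * (c34min ^ 2 - ε ^ 2 / a ^ 2)) ∧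
        |c2j| ≤ Real.sqrt (((3 - 2 * e) / 4) * (c34min ^ 2 - ε ^ 2 / a ^ 2))) ∨
      (c34min ≥ ((2 - e) / (1 - e)) * (ε / a) ∧
        |c2k| ≤ ((2 - e) / 2) * c34min - ε / (2 * a) ∧
        |c2j| ≤ ((2 - e) / 2) * c34min - ε / (2 * a))) :
    ∀ ρ ∈ Set.Icc (1 - e) (1 + e), ∀ lam : ℝ,
      Real.sqrt ((a * c34 * Real.cos (lam - θ34)) ^ 2 +
        ((a / ρ) * (c2k - c2j) +
          a * (1 / ρ + 1) * c34 * Real.sin (lam - θ34)) ^ 2) ≥ ε := by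
  intro ρ hρI lam
  obtain ⟨hρ1, hρ2⟩ := hρI
  have h1e : 0 < 1 - e := by linarith
  have hρ0 : 0 < ρ := lt_of_lt_of_le h1e hρ1
  have hs1 : |Real.sin (lam - θ34)| ≤ 1 := Real.abs_sin_le_one _
  have hmain := swarm_rt_main e a ε ρ c34min c2k c2j c34 (Real.sin (lam - θ34))
    he0 he1 ha hε hmin hminε hc34 hcase hρ1 hρ2 hs1
  have hsc : Real.cos (lam - θ34) ^ 2 = 1 - Real.sin (lam - θ34) ^ 2 := by
    have := Real.sin_sq_add_cos_sq (lam - θ34); linarith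
  have hFG : ρ ^ 2 * ((a * c34 * Real.cos (lam - θ34)) ^ 2 +
      ((a / ρ) * (c2k - c2j) +
        a * (1 / ρ + 1) * c34 * Real.sin (lam - θ34)) ^ 2) =
      a ^ 2 * c34 ^ 2 * ρ ^ 2 * (1 - Real.sin (lam - θ34) ^ 2) +
      a ^ 2 * ((c2k - c2j) + (1 + ρ) * c34 * Real.sin (lam - θ34)) ^ 2 := by
    rw [← hsc]; field_simp; try ring
  have hF2 : ε ^ 2 ≤ (a * c34 * Real.cos (lam - θ34)) ^ 2 +
      ((a / ρ) * (c2k - c2j) +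
        a * (1 / ρ + 1) * c34 * Real.sin (lam - θ34)) ^ 2 := by
    rw [← hFG] at hmain
    exact le_of_mul_le_mul_left (by linarith [hmain]) (by positivity : (0:ℝ) < ρ ^ 2)
  calc ε = Real.sqrt (ε ^ 2) := (Real.sqrt_sq hε.le).symm
    _ ≤ _ := Real.sqrt_le_sqrt hF2
end

section
/- Let 0 ≤ e < 1, a > 0, ε > 0, θ34, θ56 ∈ ℝ, and let c34,min, c56,min > 0 with c34,min ≥ ε/a and c56,min ≥ (1+e)·ε/a. Let c34 ≥ c34,min and c56 ≥ c56,min, and assume |cos(θ34 − θ56)| ≥ ( ε·(1+e)/(a·c34,min·c56,min) ) · sqrt( c34,min² + (c56,min/(1+e))² − ε²/a² ). Then for every ρ ∈ [1−e, 1+e] and every λ ∈ ℝ, S_RN(λ; ρ) ≥ ε. -/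
set_option maxHeartbeats 1000000

/-- A 2x2 PSD quadratic form is nonnegative. -/
lemma psd_quadform (A B D u v : ℝ) (hA : 0 ≤ A) (hD : 0 ≤ D)
    (hdet : B ^ 2 ≤ A * D) : 0 ≤ A * u ^ 2 + 2 * B * (u * v) + D * v ^ 2 := by
  have hs := Real.sq_sqrt hA
  have ht := Real.sq_sqrt hD
  have hs0 := Real.sqrt_nonneg A
  have ht0 := Real.sqrt_nonneg D
  set s := Real.sqrt A
  set t := Real.sqrt D
  have hB2 : B ^ 2 ≤ (s * t) ^ 2 := by nlinarith
  have hB : |B| ≤ s * t := by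
    have h1 := Real.sqrt_le_sqrt hB2
    rwa [Real.sqrt_sq_eq_abs, Real.sqrt_sq (by positivity)] at h1
  obtain ⟨hB1, hB2'⟩ := abs_le.mp hB
  rcases le_or_gt 0 (u * v) with h | h
  · nlinarith [sq_nonneg (s * u - t * v), mul_nonneg (by linarith : (0:ℝ) ≤ B + s * t) h]
  · nlinarith [sq_nonneg (s * u + t * v), mul_nonneg (by linarith : (0:ℝ) ≤ s * t - B) (by linarith : (0:ℝ) ≤ -(u * v))]

/-- RN-separated swarm design theorem in eccentric orbits: if pairwise
magnitudes satisfy `c34 ≥ c34min ≥ ε/a` and `c56 ≥ c56min ≥ (1+e) ε/a` and the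
angular-separation condition holds at the perigee `ρ = 1+e`, then the pair is
passively safe of at least `ε` in the RN plane for every `ρ ∈ [1-e, 1+e]`. -/
theorem rn_separated_swarm_safety (e a ε θ34 θ56 c34min c56min c34 c56 : ℝ)
    (he0 : 0 ≤ e) (he1 : e < 1) (ha : 0 < a) (hε : 0 < ε)
    (h34min : 0 < c34min) (h56min : 0 < c56min)
    (h34ε : c34min ≥ ε / a) (h56ε : c56min ≥ (1 + e) * ε / a)
    (h34 : c34 ≥ c34min) (h56 : c56 ≥ c56min)
    (hang : |Real.cos (θ34 - θ56)| ≥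
      (ε * (1 + e) / (a * c34min * c56min)) *
        Real.sqrt (c34min ^ 2 + (c56min / (1 + e)) ^ 2 - ε ^ 2 / a ^ 2)) :
    ∀ ρ ∈ Set.Icc (1 - e) (1 + e), ∀ lam : ℝ,
      Real.sqrt ((a * c34 * Real.cos (lam - θ34)) ^ 2 +
        ((a * c56 / ρ) * Real.sin (lam - θ56)) ^ 2) ≥ ε := by
  intro ρ hρ lam
  obtain ⟨hρ1, hρ2⟩ := hρ
  have h1e : (0:ℝ) < 1 + e := by linarith
  have hρ0 : (0:ℝ) < ρ := by linarith
  set P := a * c34 with hP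
  set Q := a * c56 / ρ with hQ
  set Pm := a * c34min with hPm
  set Qm := a * c56min / (1 + e) with hQm
  -- basic bounds
  have hPmε : ε ≤ Pm := by
    rw [hPm]
    calc ε = a * (ε / a) := by field_simp
    _ ≤ a * c34min := by exact mul_le_mul_of_nonneg_left h34ε ha.le
  have hQmε : ε ≤ Qm := by
    rw [hQm, le_div_iff₀ h1e]
    calc ε * (1 + e) = a * ((1 + e) * ε / a) := by field_simp
    _ ≤ a * c56min := mul_le_mul_of_nonneg_left h56ε ha.le
  have hPmP : Pm ≤ P := mul_le_mul_of_nonneg_left h34 ha.le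
  have hQmQ : Qm ≤ Q := by
    rw [hQm, hQ]
    exact div_le_div₀ (mul_nonneg ha.le (by linarith)) (mul_le_mul_of_nonneg_left h56 ha.le) hρ0 hρ2
  have hPε : ε ≤ P := le_trans hPmε hPmP
  have hQε : ε ≤ Q := le_trans hQmε hQmQ
  set K := Real.cos (θ34 - θ56) ^ 2 with hK
  -- the angular condition at perigee, squared
  have hS : (0:ℝ) ≤ c34min ^ 2 + (c56min / (1 + e)) ^ 2 - ε ^ 2 / a ^ 2 := by
    have h1 : ε / a ≤ c34min := h34ε
    have h2 : (ε / a) ^ 2 ≤ c34min ^ 2 := by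
      have : 0 ≤ ε / a := by positivity
      nlinarith
    have h3 : (ε / a) ^ 2 = ε ^ 2 / a ^ 2 := by field_simp
    nlinarith [sq_nonneg (c56min / (1 + e))]
  have key : ε ^ 2 * (Pm ^ 2 + Qm ^ 2 - ε ^ 2) ≤ Pm ^ 2 * Qm ^ 2 * K := by
    have hC : (0:ℝ) ≤ ε * (1 + e) / (a * c34min * c56min) := by positivity
    have hsq : (ε * (1 + e) / (a * c34min * c56min)) ^ 2 *
        (c34min ^ 2 + (c56min / (1 + e)) ^ 2 - ε ^ 2 / a ^ 2) ≤ K := by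
      have h1 : ((ε * (1 + e) / (a * c34min * c56min)) *
          Real.sqrt (c34min ^ 2 + (c56min / (1 + e)) ^ 2 - ε ^ 2 / a ^ 2)) ^ 2 ≤
          |Real.cos (θ34 - θ56)| ^ 2 := by
        have h0 : 0 ≤ (ε * (1 + e) / (a * c34min * c56min)) *
            Real.sqrt (c34min ^ 2 + (c56min / (1 + e)) ^ 2 - ε ^ 2 / a ^ 2) := by
          positivity
        nlinarith [hang]
      rw [mul_pow, Real.sq_sqrt hS, sq_abs] at h1
      exact h1
    have heq : (ε * (1 + e) / (a * c34min * c56min)) ^ 2 *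
        (c34min ^ 2 + (c56min / (1 + e)) ^ 2 - ε ^ 2 / a ^ 2) * (Pm ^ 2 * Qm ^ 2)
        = ε ^ 2 * (Pm ^ 2 + Qm ^ 2 - ε ^ 2) := by
      rw [hPm, hQm]; field_simp
    have hPQ : (0:ℝ) < Pm ^ 2 * Qm ^ 2 := by positivity
    calc ε ^ 2 * (Pm ^ 2 + Qm ^ 2 - ε ^ 2) =
        (ε * (1 + e) / (a * c34min * c56min)) ^ 2 *
        (c34min ^ 2 + (c56min / (1 + e)) ^ 2 - ε ^ 2 / a ^ 2) * (Pm ^ 2 * Qm ^ 2) := heq.symm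
      _ ≤ K * (Pm ^ 2 * Qm ^ 2) := mul_le_mul_of_nonneg_right hsq hPQ.le
      _ = Pm ^ 2 * Qm ^ 2 * K := by ring
  -- monotonicity in P and Q
  have hPm2 : (0:ℝ) < Pm ^ 2 := by positivity
  have hQm2 : (0:ℝ) < Qm ^ 2 := by positivity
  have hPmε2 : ε ^ 2 ≤ Pm ^ 2 := by nlinarith
  have hQmε2 : ε ^ 2 ≤ Qm ^ 2 := by nlinarith
  have haux1 : (0:ℝ) ≤ ε ^ 2 * (Qm ^ 2 - ε ^ 2) := by nlinarith
  have hQmK : ε ^ 2 ≤ Qm ^ 2 * K := by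
    by_contra h
    push_neg at h
    have hm := mul_lt_mul_of_pos_right h hPm2
    linarith [key, haux1, hm]
  have hP2 : Pm ^ 2 ≤ P ^ 2 := by nlinarith
  have hQ2 : Qm ^ 2 ≤ Q ^ 2 := by nlinarith
  have step1 : ε ^ 2 * (P ^ 2 + Qm ^ 2 - ε ^ 2) ≤ P ^ 2 * Qm ^ 2 * K := by
    linarith [key, mul_nonneg (sub_nonneg.2 hP2) (sub_nonneg.2 hQmK)]
  have haux2 : (0:ℝ) ≤ ε ^ 2 * (P ^ 2 - ε ^ 2) := by nlinarith
  have hPK : ε ^ 2 ≤ P ^ 2 * K := by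
    by_contra h
    push_neg at h
    have hm := mul_lt_mul_of_pos_right h hQm2
    linarith [step1, haux2, hm]
  have step2 : ε ^ 2 * (P ^ 2 + Q ^ 2 - ε ^ 2) ≤ P ^ 2 * Q ^ 2 * K := by
    linarith [step1, mul_nonneg (sub_nonneg.2 hQ2) (sub_nonneg.2 hPK)]
  have haux3 : (0:ℝ) ≤ ε ^ 2 * (Q ^ 2 - ε ^ 2) := by nlinarith
  have hQK : ε ^ 2 ≤ Q ^ 2 * K := by
    by_contra h
    push_neg at h
    have hm := mul_lt_mul_of_pos_right h (pow_pos (lt_of_lt_of_le hε hPε) 2)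
    linarith [step2, haux3, hm]
  -- rewrite the angle
  have hθ : lam - θ56 = (lam - θ34) + (θ34 - θ56) := by ring
  rw [hθ, Real.sin_add]
  rw [ge_iff_le, show ε = Real.sqrt (ε ^ 2) by rw [Real.sqrt_sq hε.le]]
  apply Real.sqrt_le_sqrt
  set u := Real.cos (lam - θ34) with hu
  set v := Real.sin (lam - θ34) with hv
  set cφ := Real.cos (θ34 - θ56) with hcφ
  set sφ := Real.sin (θ34 - θ56) with hsφ
  have pyth1 : v ^ 2 + u ^ 2 = 1 := Real.sin_sq_add_cos_sq _
  have pyth2 : sφ ^ 2 + cφ ^ 2 = 1 := Real.sin_sq_add_cos_sq _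
  -- quadratic form setup
  have hKc : K = cφ ^ 2 := hK
  rw [hKc] at step2 hQK
  have hPε2 : ε ^ 2 ≤ P ^ 2 := pow_le_pow_left₀ hε.le hPε 2
  have hA : (0:ℝ) ≤ P ^ 2 + Q ^ 2 * sφ ^ 2 - ε ^ 2 := by
    linarith [sq_nonneg (Q * sφ), hPε2]
  have hD : (0:ℝ) ≤ Q ^ 2 * cφ ^ 2 - ε ^ 2 := by linarith
  have hid : (P ^ 2 + Q ^ 2 * sφ ^ 2 - ε ^ 2) * (Q ^ 2 * cφ ^ 2 - ε ^ 2) -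
      (Q ^ 2 * sφ * cφ) ^ 2 = P ^ 2 * Q ^ 2 * cφ ^ 2 - ε ^ 2 * (P ^ 2 + Q ^ 2 - ε ^ 2) := by
    linear_combination (-(ε ^ 2 * Q ^ 2)) * pyth2
  have hdet : (Q ^ 2 * sφ * cφ) ^ 2 ≤
      (P ^ 2 + Q ^ 2 * sφ ^ 2 - ε ^ 2) * (Q ^ 2 * cφ ^ 2 - ε ^ 2) := by linarith
  have hform := psd_quadform (P ^ 2 + Q ^ 2 * sφ ^ 2 - ε ^ 2) (Q ^ 2 * sφ * cφ)
      (Q ^ 2 * cφ ^ 2 - ε ^ 2) u v hA hD hdet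
  have hexp : (P * u) ^ 2 + (Q * (v * cφ + u * sφ)) ^ 2 - ε ^ 2 =
      ((P ^ 2 + Q ^ 2 * sφ ^ 2 - ε ^ 2) * u ^ 2 + 2 * (Q ^ 2 * sφ * cφ) * (u * v) +
        (Q ^ 2 * cφ ^ 2 - ε ^ 2) * v ^ 2) + ε ^ 2 * ((v ^ 2 + u ^ 2) - 1) := by ring
  have hp : ε ^ 2 * (v ^ 2 + u ^ 2 - 1) = 0 := by rw [pyth1]; ring
  linarith [hform, hexp, hp]
end

section
/- Let a > 0, ρ > 0, ε > 0, and define g(c34, c56) = ( ε·ρ/(a·c34·c56) ) · sqrt( c34² + (c56/ρ)² − ε²/a² ) on the region where c34 ≥ ε/a and c56/ρ ≥ ε/a. Then g is antitone in each argument on this region: if ε/a ≤ c34 ≤ c34' and ε·ρ/a ≤ c56 ≤ c56', then g(c34', c56') ≤ g(c34, c56). -/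
/-- The right-hand side
`g(c34, c56) = (ε ρ/(a c34 c56)) √(c34² + (c56/ρ)² - ε²/a²)` of the RN
angular-separation condition is antitone in each argument on the region
`c34 ≥ ε/a`, `c56/ρ ≥ ε/a`: enlarging either magnitude weakens the required
bound. -/
theorem rn_angular_bound_antitone (a ρ ε c34 c34' c56 c56' : ℝ)
    (ha : 0 < a) (hρ : 0 < ρ) (hε : 0 < ε)
    (h34 : ε / a ≤ c34) (h34' : c34 ≤ c34')
    (h56 : ε * ρ / a ≤ c56) (h56' : c56 ≤ c56') :
    (ε * ρ / (a * c34' * c56')) *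
        Real.sqrt (c34' ^ 2 + (c56' / ρ) ^ 2 - ε ^ 2 / a ^ 2) ≤
      (ε * ρ / (a * c34 * c56)) *
        Real.sqrt (c34 ^ 2 + (c56 / ρ) ^ 2 - ε ^ 2 / a ^ 2) := by
  have hc34 : 0 < c34 := lt_of_lt_of_le (div_pos hε ha) h34
  have hc34' : 0 < c34' := lt_of_lt_of_le hc34 h34'
  have hc56 : 0 < c56 := lt_of_lt_of_le (div_pos (mul_pos hε hρ) ha) h56
  have hc56' : 0 < c56' := lt_of_lt_of_le hc56 h56'
  have hA : 0 ≤ ε * ρ / (a * c34' * c56') := by positivity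
  have hB : 0 ≤ ε * ρ / (a * c34 * c56) := by positivity
  have k34 : ε ≤ a * c34 := by rw [div_le_iff₀ ha] at h34; linarith
  have k56 : ε * ρ ≤ a * c56 := by rw [div_le_iff₀ ha] at h56; linarith
  have k56' : ε * ρ ≤ a * c56' := by nlinarith
  have t1 : 0 ≤ (a ^ 2 * c34 ^ 2 - ε ^ 2) * ((c56' ^ 2 - c56 ^ 2) * c34' ^ 2) := by
    apply mul_nonneg (by nlinarith) (mul_nonneg (by nlinarith) (by positivity))
  have t2 : 0 ≤ (a ^ 2 * c56' ^ 2 - ε ^ 2 * ρ ^ 2) * ((c34' ^ 2 - c34 ^ 2) * c56 ^ 2) := by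
    apply mul_nonneg (by nlinarith [mul_pos hε hρ, mul_pos ha hc56'])
      (mul_nonneg (by nlinarith) (by positivity))
  have e1 : c34 ^ 2 + (c56 / ρ) ^ 2 - ε ^ 2 / a ^ 2
      = (a ^ 2 * ρ ^ 2 * c34 ^ 2 + a ^ 2 * c56 ^ 2 - ε ^ 2 * ρ ^ 2) / (a ^ 2 * ρ ^ 2) := by
    field_simp
  have e2 : c34' ^ 2 + (c56' / ρ) ^ 2 - ε ^ 2 / a ^ 2
      = (a ^ 2 * ρ ^ 2 * c34' ^ 2 + a ^ 2 * c56' ^ 2 - ε ^ 2 * ρ ^ 2) / (a ^ 2 * ρ ^ 2) := by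
    field_simp
  rw [← Real.sqrt_sq hA, ← Real.sqrt_sq hB, ← Real.sqrt_mul (sq_nonneg _),
    ← Real.sqrt_mul (sq_nonneg _)]
  apply Real.sqrt_le_sqrt
  rw [e1, e2, div_pow, div_pow, div_mul_div_comm, div_mul_div_comm,
    div_le_div_iff₀ (by positivity) (by positivity)]
  nlinarith [mul_nonneg (by positivity : (0:ℝ) ≤ a ^ 4 * ρ ^ 6 * ε ^ 2) t1,
    mul_nonneg (by positivity : (0:ℝ) ≤ a ^ 4 * ρ ^ 4 * ε ^ 2) t2]
end
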